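/- Let Π_M⊆Π. For every x∈W one has c_{δ(M)}(x·w⁰_M)=c_M(x)·w⁰_M and m_{δ(M)}(x·w⁰_M)=(w⁰_M)⁻¹·m_M(x)·w⁰_M. -/

import Mathlib

/- Formalization of the setting of Barbasch–Ciubotaru, "Hermitian forms for
affine Hecke algebras": a reduced root system, Weyl group, parameters,
complexifications, and the graded affine Hecke algebra. -/

noncomputable section

structure GHA where
  (V Vd VC VdC W H : Type)
  [addV : AddCommGroup V] [modV : Module ℝ V] [fdV : FiniteDimensional ℝ V]
  [addVd : AddCommGroup Vd] [modVd : Module ℝ Vd] [fdVd : FiniteDimensional ℝ Vd]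
  [deqV : DecidableEq V] [deqW : DecidableEq W]
  [addVC : AddCommGroup VC] [modVC : Module ℂ VC]
  [addVdC : AddCommGroup VdC] [modVdC : Module ℂ VdC]
  [grpW : Group W] [finW : Fintype W]
  [ringH : Ring H] [algH : Algebra ℂ H]
  -- the perfect bilinear pairing between V and V∨
  pairR : V →ₗ[ℝ] Vd →ₗ[ℝ] ℝ
  pair_nondeg_left : ∀ v : V, (∀ u : Vd, pairR v u = 0) → v = 0
  pair_nondeg_right : ∀ u : Vd, (∀ v : V, pairR v u = 0) → u = 0
  -- roots, coroots, and the bijection α ↦ α∨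
  roots : Finset V
  corootsF : Finset Vd
  cv : V → Vd
  roots_ne_zero : ∀ α ∈ roots, α ≠ 0
  coroots_ne_zero : ∀ β ∈ corootsF, β ≠ 0
  cv_mem : ∀ α ∈ roots, cv α ∈ corootsF
  cv_injOn : Set.InjOn cv roots
  cv_surjOn : ∀ β ∈ corootsF, ∃ α ∈ roots, cv α = β
  pair_cv_self : ∀ α ∈ roots, pairR α (cv α) = 2
  reflV_mem : ∀ α ∈ roots, ∀ β ∈ roots, β - pairR β (cv α) • α ∈ roots
  reflVd_mem : ∀ α ∈ roots, ∀ β ∈ corootsF, β - pairR α β • cv α ∈ corootsF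
  reduced : ∀ α ∈ roots, (2 : ℝ) • α ∉ roots
  -- simple roots and positive roots
  simples : Finset V
  posRoots : Finset V
  simples_subset : simples ⊆ posRoots
  posRoots_subset : posRoots ⊆ roots
  roots_pos_or_neg : ∀ α ∈ roots, α ∈ posRoots ∨ -α ∈ posRoots
  posRoots_not_neg : ∀ α ∈ posRoots, -α ∉ posRoots
  simples_linearIndependent : LinearIndependent ℝ (fun β : {x // x ∈ simples} => (β : V))
  posRoots_nonneg_comb : ∀ α ∈ posRoots, ∃ c : V → ℝ,
    (∀ β ∈ simples, 0 ≤ c β) ∧ α = ∑ β ∈ simples, c β • β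
  -- the Weyl group, acting on V and V∨, generated by the reflections s_α
  s : V → W
  actV : W →* V ≃ₗ[ℝ] V
  actVd : W →* Vd ≃ₗ[ℝ] Vd
  actV_s : ∀ α ∈ roots, ∀ v : V, actV (s α) v = v - pairR v (cv α) • α
  actVd_s : ∀ α ∈ roots, ∀ u : Vd, actVd (s α) u = u - pairR α u • cv α
  act_pair : ∀ (w : W) (v : V) (u : Vd), pairR (actV w v) (actVd w u) = pairR v u
  actV_faithful : ∀ w : W, (∀ v : V, actV w v = v) → w = 1
  gen_by_refl : Subgroup.closure (s '' roots) = (⊤ : Subgroup W)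
  actV_roots : ∀ (w : W), ∀ α ∈ roots, actV w α ∈ roots
  -- the longest element
  w0 : W
  w0_neg : ∀ α ∈ posRoots, -(actV w0 α) ∈ posRoots
  w0_unique : ∀ w : W, (∀ α ∈ posRoots, -(actV w α) ∈ posRoots) → w = w0
  -- the parameter function k (extended W-invariantly to all roots)
  kpar : V → ℝ
  kpar_invariant : ∀ (w : W), ∀ α ∈ roots, kpar (actV w α) = kpar α
  -- complexifications of V and V∨, with real and imaginary parts
  iV : V →+ VC
  iVd : Vd →+ VdC
  iV_smul : ∀ (r : ℝ) (v : V), iV (r • v) = (r : ℂ) • iV v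
  iVd_smul : ∀ (r : ℝ) (u : Vd), iVd (r • u) = (r : ℂ) • iVd u
  reV : VC →+ V
  imV : VC →+ V
  reVd : VdC →+ Vd
  imVd : VdC →+ Vd
  reV_iV : ∀ v : V, reV (iV v) = v
  imV_iV : ∀ v : V, imV (iV v) = 0
  reVd_iVd : ∀ u : Vd, reVd (iVd u) = u
  imVd_iVd : ∀ u : Vd, imVd (iVd u) = 0
  vc_decomp : ∀ x : VC, x = iV (reV x) + Complex.I • iV (imV x)
  vdc_decomp : ∀ y : VdC, y = iVd (reVd y) + Complex.I • iVd (imVd y)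
  reV_real_smul : ∀ (r : ℝ) (x : VC), reV ((r : ℂ) • x) = r • reV x
  imV_real_smul : ∀ (r : ℝ) (x : VC), imV ((r : ℂ) • x) = r • imV x
  reVd_real_smul : ∀ (r : ℝ) (y : VdC), reVd ((r : ℂ) • y) = r • reVd y
  imVd_real_smul : ∀ (r : ℝ) (y : VdC), imVd ((r : ℂ) • y) = r • imVd y
  -- the complex bilinear extension of the pairing
  pairC : VC → VdC → ℂ
  pairC_add_left : ∀ x x' y, pairC (x + x') y = pairC x y + pairC x' y
  pairC_add_right : ∀ x y y', pairC x (y + y') = pairC x y + pairC x y'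
  pairC_smul_left : ∀ (c : ℂ) x y, pairC (c • x) y = c * pairC x y
  pairC_smul_right : ∀ (c : ℂ) x y, pairC x (c • y) = c * pairC x y
  pairC_compat : ∀ (v : V) (u : Vd), pairC (iV v) (iVd u) = (pairR v u : ℂ)
  -- the complexified Weyl group actions
  actVC : W →* VC ≃ₗ[ℂ] VC
  actVdC : W →* VdC ≃ₗ[ℂ] VdC
  actVC_iV : ∀ (w : W) (v : V), actVC w (iV v) = iV (actV w v)
  actVdC_iVd : ∀ (w : W) (u : Vd), actVdC w (iVd u) = iVd (actVd w u)
  -- the graded affine Hecke algebra H: elements t_w and the subalgebra S(V_ℂ)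
  t : W → H
  t_one : t 1 = 1
  t_mul : ∀ w w', t w * t w' = t (w * w')
  θ : VC → H
  θ_add : ∀ x y, θ (x + y) = θ x + θ y
  θ_smul : ∀ (c : ℂ) (x : VC), θ (c • x) = c • θ x
  θ_comm : ∀ x y, θ x * θ y = θ y * θ x
  -- the graded Hecke algebra cross relation
  cross_rel : ∀ α ∈ simples, ∀ ω : VC,
    θ ω * t (s α) = t (s α) * θ (actVC (s α) ω)
      + algebraMap ℂ H ((kpar α : ℂ) * pairC ω (iVd (cv α)))
  -- H ≅ ℂ[W] ⊗ S(V_ℂ) as a (ℂ[W], S(V_ℂ))-bimodule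
  pbw_span : ∀ h : H, ∃ c : W → Algebra.adjoin ℂ (Set.range θ),
    h = ∑ w : W, t w * (c w : H)
  pbw_indep : ∀ c : W → Algebra.adjoin ℂ (Set.range θ),
    ∑ w : W, t w * (c w : H) = 0 → ∀ w, c w = 0
  -- the subalgebra generated by θ(V_ℂ) is the symmetric algebra S(V_ℂ)
  poly_univ : ∀ (B : Type) [CommRing B] [Algebra ℂ B] (f : VC → B),
    (∀ x y, f (x + y) = f x + f y) → (∀ (c : ℂ) x, f (c • x) = c • f x) →
    ∃! g : Algebra.adjoin ℂ (Set.range θ) →ₐ[ℂ] B,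
      ∀ x : VC, g ⟨θ x, Algebra.subset_adjoin ⟨x, rfl⟩⟩ = f x

attribute [instance] GHA.addV GHA.modV GHA.fdV GHA.addVd GHA.modVd GHA.fdVd
  GHA.deqV GHA.deqW GHA.addVC GHA.modVC GHA.addVdC GHA.modVdC GHA.grpW GHA.finW
  GHA.ringH GHA.algH

namespace GHA

/-- Complex conjugation on V_ℂ. -/
def conjVC (D : GHA) (x : D.VC) : D.VC := D.iV (D.reV x) - Complex.I • D.iV (D.imV x)

/-- Complex conjugation on V∨_ℂ. -/
def conjVdC (D : GHA) (y : D.VdC) : D.VdC := D.iVd (D.reVd y) - Complex.I • D.iVd (D.imVd y)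

/-- The bullet operation: conjugate-linear anti-automorphism with t_w ↦ t_{w⁻¹},
ω ↦ conj ω. -/
structure IsBullet (D : GHA) (f : D.H → D.H) : Prop where
  map_add : ∀ x y, f (x + y) = f x + f y
  map_smul : ∀ (c : ℂ) (x : D.H), f (c • x) = (starRingEnd ℂ) c • f x
  map_mul : ∀ x y, f (x * y) = f y * f x
  map_one : f 1 = 1
  map_t : ∀ w : D.W, f (D.t w) = D.t w⁻¹
  map_theta : ∀ x : D.VC, f (D.θ x) = D.θ (D.conjVC x)

/-- The star operation: conjugate-linear anti-automorphism with t_w ↦ t_{w⁻¹},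
ω ↦ −t_{w₀}·conj(w₀(ω))·t_{w₀}. -/
structure IsStar (D : GHA) (f : D.H → D.H) : Prop where
  map_add : ∀ x y, f (x + y) = f x + f y
  map_smul : ∀ (c : ℂ) (x : D.H), f (c • x) = (starRingEnd ℂ) c • f x
  map_mul : ∀ x y, f (x * y) = f y * f x
  map_one : f 1 = 1
  map_t : ∀ w : D.W, f (D.t w) = D.t w⁻¹
  map_theta : ∀ x : D.VC,
    f (D.θ x) = -(D.t D.w0 * D.θ (D.conjVC (D.actVC D.w0 x)) * D.t D.w0)

/-- The automorphism δ: t_w ↦ t_{w₀ww₀}, ω ↦ −w₀(ω). -/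
structure IsDelta (D : GHA) (f : D.H → D.H) : Prop where
  map_add : ∀ x y, f (x + y) = f x + f y
  map_smul : ∀ (c : ℂ) (x : D.H), f (c • x) = c • f x
  map_mul : ∀ x y, f (x * y) = f x * f y
  map_one : f 1 = 1
  map_t : ∀ w : D.W, f (D.t w) = D.t (D.w0 * w * D.w0)
  map_theta : ∀ x : D.VC, f (D.θ x) = -(D.θ (D.actVC D.w0 x))

/-- The standing assumption k_{−w₀(α)} = k_α for α ∈ Π. -/
def KSymm (D : GHA) : Prop := ∀ α ∈ D.simples, D.kpar (-(D.actV D.w0 α)) = D.kpar α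

section Forms

variable {X : Type} [AddCommGroup X] [Module ℂ X]

/-- Sesquilinear form (conjugate-linear in the first variable). -/
def SesqForm (B : X → X → ℂ) : Prop :=
  (∀ x x' y, B (x + x') y = B x y + B x' y) ∧
  (∀ x y y', B x (y + y') = B x y + B x y') ∧
  (∀ (c : ℂ) (x y : X), B (c • x) y = (starRingEnd ℂ) c * B x y) ∧
  (∀ (c : ℂ) (x y : X), B x (c • y) = c * B x y)

/-- Hermitian form. -/
def HermForm (B : X → X → ℂ) : Prop := ∀ x y, B x y = (starRingEnd ℂ) (B y x)

/-- κ-invariance of a form: ⟨π(h)x, y⟩ = ⟨x, π(κ(h))y⟩. -/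
def InvForm (D : GHA) (π : D.H →ₐ[ℂ] Module.End ℂ X) (κ : D.H → D.H)
    (B : X → X → ℂ) : Prop :=
  ∀ (h : D.H) (x y : X), B (π h x) y = B x (π (κ h) y)

end Forms

/-- Irreducibility of a representation of a ℂ-algebra A on X. -/
def IsIrrRep (A : Type) [Ring A] [Algebra ℂ A] {X : Type} [AddCommGroup X]
    [Module ℂ X] (π : A →ₐ[ℂ] Module.End ℂ X) : Prop :=
  Nontrivial X ∧ ∀ U : Submodule ℂ X, (∀ (a : A), ∀ x ∈ U, π a x ∈ U) → U = ⊥ ∨ U = ⊤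

/-- Generalized weight space for a commuting family of operators indexed by V_ℂ. -/
def wtAux (D : GHA) {X : Type} [AddCommGroup X] [Module ℂ X]
    (T : D.VC → Module.End ℂ X) (lam : D.VdC) : Submodule ℂ X where
  carrier := {x | ∀ ω : D.VC, ∃ n : ℕ,
    ((T ω - D.pairC ω lam • (1 : Module.End ℂ X)) ^ n) x = 0}
  zero_mem' := fun ω => ⟨1, by simp⟩
  add_mem' := by
    intro a b ha hb
    intro ω
    obtain ⟨n, hn⟩ := ha ω
    obtain ⟨m, hm⟩ := hb ω
    refine ⟨n + m, ?_⟩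
    have hA : ((T ω - D.pairC ω lam • (1 : Module.End ℂ X)) ^ (n + m)) a = 0 := by
      rw [add_comm, pow_add, Module.End.mul_apply, hn, map_zero]
    have hB : ((T ω - D.pairC ω lam • (1 : Module.End ℂ X)) ^ (n + m)) b = 0 := by
      rw [pow_add, Module.End.mul_apply, hm, map_zero]
    rw [map_add, hA, hB, add_zero]
  smul_mem' := by
    intro c a ha ω
    obtain ⟨n, hn⟩ := ha ω
    exact ⟨n, by rw [map_smul, hn, smul_zero]⟩

/-- Generalized A-weight space X_λ of an H-module. -/
def wtH (D : GHA) {X : Type} [AddCommGroup X] [Module ℂ X]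
    (π : D.H →ₐ[ℂ] Module.End ℂ X) (lam : D.VdC) : Submodule ℂ X :=
  D.wtAux (fun ω => π (D.θ ω)) lam

/-- The set Ω(X) of A-weights of an H-module. -/
def OmegaH (D : GHA) {X : Type} [AddCommGroup X] [Module ℂ X]
    (π : D.H →ₐ[ℂ] Module.End ℂ X) : Set D.VdC :=
  {lam | D.wtH π lam ≠ ⊥}

/-- Casselman's criterion for temperedness. -/
def IsTempered (D : GHA) {X : Type} [AddCommGroup X] [Module ℂ X]
    (π : D.H →ₐ[ℂ] Module.End ℂ X) : Prop :=
  ∀ lam ∈ D.OmegaH π, ∀ ω : D.V,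
    (∀ α ∈ D.simples, 0 < D.pairR ω (D.cv α)) → D.pairR ω (D.reVd lam) ≤ 0

section Parabolic

variable (D : GHA) (PiM : Finset D.V)

/-- The parabolic subgroup W_M. -/
def WM : Subgroup D.W := Subgroup.closure (D.s '' (PiM : Set D.V))

/-- The positive roots R⁺_M lying in the span of Π_M. -/
def RplusM : Set D.V :=
  {α | α ∈ D.posRoots ∧ α ∈ Submodule.span ℝ (PiM : Set D.V)}

/-- x is the minimal length representative of x·W_M, i.e. x(R⁺_M) ⊆ R⁺. -/
def IsMinRep (x : D.W) : Prop := ∀ α ∈ D.RplusM PiM, D.actV x α ∈ D.posRoots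

/-- The set J_M of minimal length coset representatives. -/
abbrev JM : Type := {x : D.W // D.IsMinRep PiM x}

/-- The parabolic subalgebra H_M. -/
def HM : Subalgebra ℂ D.H :=
  Algebra.adjoin ℂ (Set.range D.θ ∪ (D.t '' ((D.WM PiM : Subgroup D.W) : Set D.W)))

/-- t_w as an element of H_M, for w ∈ W_M. -/
def tM (w : D.W) (hw : w ∈ D.WM PiM) : D.HM PiM :=
  ⟨D.t w, Algebra.subset_adjoin (Or.inr ⟨w, hw, rfl⟩)⟩

/-- θ(ω) as an element of H_M. -/
def θM (x : D.VC) : D.HM PiM :=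
  ⟨D.θ x, Algebra.subset_adjoin (Or.inl ⟨x, rfl⟩)⟩

/-- Π_{δ(M)} = −w₀(Π_M). -/
def deltaSimples : Finset D.V := PiM.image (fun α => -(D.actV D.w0 α))

/-- w is the longest element of W_M. -/
def IsLongest (w : D.W) : Prop :=
  w ∈ D.WM PiM ∧ ∀ α ∈ D.RplusM PiM, -(D.actV w α) ∈ D.RplusM PiM

end Parabolic

/-- The unique factorization z = c_M(z)·m_M(z) with c_M(z) minimal in z·W_M and
m_M(z) ∈ W_M. -/
structure CosetData (D : GHA) (PiM : Finset D.V) where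
  c : D.W → D.W
  m : D.W → D.W
  c_min : ∀ z, D.IsMinRep PiM (c z)
  m_mem : ∀ z, m z ∈ D.WM PiM
  factor : ∀ z, z = c z * m z
  uniq : ∀ (z c' m' : D.W), D.IsMinRep PiM c' → m' ∈ D.WM PiM → z = c' * m' →
    c' = c z ∧ m' = m z

/-- The defining formulas for the H-action on the parabolically induced module
X(M,σ) = H ⊗_{H_M} U, realized on ⊕_{x ∈ J_M} U. -/
def IsInducedAction (D : GHA) (PiM : Finset D.V) (cd : CosetData D PiM)
    {U : Type} [AddCommGroup U] [Module ℂ U]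
    (σ : D.HM PiM →ₐ[ℂ] Module.End ℂ U)
    (πI : D.H →ₐ[ℂ] Module.End ℂ (D.JM PiM → U)) : Prop :=
  (∀ (z : D.W) (x : D.JM PiM) (v : U),
      πI (D.t z) (Pi.single x v) =
        Pi.single (⟨cd.c (z * x.1), cd.c_min _⟩ : D.JM PiM)
          (σ (D.tM PiM (cd.m (z * x.1)) (cd.m_mem _)) v)) ∧
  (∀ (ω : D.VC) (x : D.JM PiM) (v : U),
      πI (D.θ ω) (Pi.single x v) =
        Pi.single x (σ (D.θM PiM (D.actVC x.1⁻¹ ω)) v) +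
          ∑ β ∈ D.posRoots.filter (fun β => -(D.actV x.1⁻¹ β) ∈ D.posRoots),
            ((D.kpar β : ℂ) * D.pairC ω (D.iVd (D.cv β))) •
              (Pi.single (⟨cd.c (D.s β * x.1), cd.c_min _⟩ : D.JM PiM)
                (σ (D.tM PiM (cd.m (D.s β * x.1)) (cd.m_mem _)) v) : D.JM PiM → U))

end GHA


/-! The element w⁰_M = w₀·w_{0,δ(M)} carries R⁺_{δ(M)} into R⁺_M: w_{0,δ(M)} sends R⁺_{δ(M)} to
−R⁺_{δ(M)}, and −w₀ preserves R⁺ and maps Π_{δ(M)} onto Π_M. Hence c_M(x)·w⁰_M is the minimal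
representative of its W_{δ(M)}-coset. Since w₀·s_α·w₀ = s_{−w₀α}, conjugation by w⁰_M maps W_M into
W_{δ(M)}, so x·w⁰_M = (c_M(x)·w⁰_M)·((w⁰_M)⁻¹·m_M(x)·w⁰_M) is the factorization for δ(M), and
uniqueness of the factorization gives both identities. -/

open Module

namespace LinearMap.transvection

variable {R V : Type*} [CommRing R] [AddCommGroup V] [Module R V]

theorem pow_eq {f : Dual R V} {v : V} (hfv : f v = 0) (n : ℕ) :
    transvection f v ^ n = transvection f (n • v) := by
  induction n with
  | zero => ext; simp [transvection]
  | succ n ih =>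
    rw [pow_succ, ih, Module.End.mul_eq_comp, comp_of_left_eq hfv, succ_nsmul]

theorem eq_zero_of_isOfFinOrder [IsDomain R] [CharZero R] [IsTorsionFree R V]
    {f : Dual R V} {v : V} (hfv : f v = 0) (hv : v ≠ 0)
    (h : IsOfFinOrder (transvection f v)) : f = 0 := by
  obtain ⟨n, hn, hpow⟩ := isOfFinOrder_iff_pow_eq_one.mp h
  ext x
  have hx := LinearMap.congr_fun hpow x
  rw [pow_eq hfv, apply, Module.End.one_apply, add_eq_left, ← Nat.cast_smul_eq_nsmul R,
    smul_smul, smul_eq_zero, mul_eq_zero, Nat.cast_eq_zero] at hx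
  simpa [hn.ne', hv] using hx

end LinearMap.transvection

namespace Module

variable {R V : Type*} [CommRing R] [AddCommGroup V] [Module R V]

theorem preReflection_mul_preReflection {x : V} {f g : Dual R V} (hg : g x = 2) :
    preReflection x g * preReflection x f = LinearMap.transvection (f - g) x := by
  ext y
  simp only [Module.End.mul_apply, preReflection_apply, map_sub, map_smul, hg,
    LinearMap.transvection.apply, LinearMap.sub_apply]
  module

/-- Two reflections in the same vector `x` whose product has finite order coincide: the product
is a transvection, and a nontrivial transvection has infinite order in characteristic zero. -/
theorem Dual.eq_of_isOfFinOrder_preReflection_mul [IsDomain R] [CharZero R] [IsTorsionFree R V]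
    {x : V} {f g : Dual R V} (hf : f x = 2) (hg : g x = 2)
    (h : IsOfFinOrder (preReflection x g * preReflection x f)) : f = g := by
  have hx : x ≠ 0 := by rintro rfl; simp at hf
  rw [preReflection_mul_preReflection hg] at h
  exact sub_eq_zero.mp (LinearMap.transvection.eq_zero_of_isOfFinOrder (by simp [hf, hg]) hx h)

end Module

namespace GHA

variable {D : GHA}

lemma actV_mul_apply (w w' : D.W) (v : D.V) :
    D.actV (w * w') v = D.actV w (D.actV w' v) := by
  rw [map_mul]; rfl

lemma actV_injective : Function.Injective D.actV := by
  intro a b h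
  rw [← inv_mul_eq_one]
  refine D.actV_faithful _ fun v => ?_
  rw [map_mul, map_inv, h, inv_mul_cancel]
  rfl

lemma actV_s_eq_preReflection {γ : D.V} (hγ : γ ∈ D.roots) :
    (D.actV (D.s γ) : Module.End ℝ D.V) = preReflection γ (D.pairR.flip (D.cv γ)) := by
  ext v
  exact D.actV_s γ hγ v

lemma actV_conj_s_eq_preReflection (w : D.W) {γ : D.V} (hγ : γ ∈ D.roots) :
    (D.actV (w * D.s γ * w⁻¹) : Module.End ℝ D.V) =
      preReflection (D.actV w γ) (D.pairR.flip (D.actVd w (D.cv γ))) := by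
  ext v
  have hpair : D.pairR (D.actV w⁻¹ v) (D.cv γ) = D.pairR v (D.actVd w (D.cv γ)) := by
    rw [← D.act_pair w, ← actV_mul_apply, mul_inv_cancel, map_one]
    rfl
  simp only [LinearEquiv.coe_coe, actV_mul_apply, D.actV_s γ hγ, map_sub, map_smul, hpair,
    preReflection_apply, LinearMap.flip_apply, ← actV_mul_apply w w⁻¹, mul_inv_cancel, map_one]
  rfl

lemma mul_s_mul_inv (w : D.W) {γ : D.V} (hγ : γ ∈ D.roots) :
    w * D.s γ * w⁻¹ = D.s (D.actV w γ) := by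
  set δ := D.actV w γ
  have hδ : δ ∈ D.roots := D.actV_roots w γ hγ
  have hf : D.pairR.flip (D.actVd w (D.cv γ)) δ = 2 := by
    rw [LinearMap.flip_apply, D.act_pair, D.pair_cv_self γ hγ]
  have hfin : IsOfFinOrder (preReflection δ (D.pairR.flip (D.cv δ)) *
      preReflection δ (D.pairR.flip (D.actVd w (D.cv γ)))) := by
    rw [← actV_s_eq_preReflection hδ, ← actV_conj_s_eq_preReflection w hγ]
    simpa using (LinearEquiv.automorphismGroup.toLinearMapMonoidHom.comp D.actV).isOfFinOrder
      (isOfFinOrder_of_finite (D.s δ * (w * D.s γ * w⁻¹)))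
  have hfg := Dual.eq_of_isOfFinOrder_preReflection_mul hf (D.pair_cv_self δ hδ) hfin
  apply actV_injective
  apply LinearEquiv.toLinearMap_injective
  rw [actV_conj_s_eq_preReflection w hγ, actV_s_eq_preReflection hδ, hfg]

lemma s_mul_self {γ : D.V} (hγ : γ ∈ D.roots) : D.s γ * D.s γ = 1 :=
  D.actV_faithful _ fun v => by
    rw [actV_mul_apply, D.actV_s γ hγ, D.actV_s γ hγ]
    exact involutive_preReflection (f := D.pairR.flip (D.cv γ)) (D.pair_cv_self γ hγ) v

lemma s_neg {γ : D.V} (hγ : γ ∈ D.roots) : D.s (-γ) = D.s γ := by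
  have hsγ : D.actV (D.s γ) γ = -γ := by
    rw [D.actV_s γ hγ, D.pair_cv_self γ hγ]
    module
  rw [← hsγ, ← mul_s_mul_inv _ hγ, inv_eq_of_mul_eq_one_right (s_mul_self hγ), s_mul_self hγ,
    one_mul]

variable (D) in
lemma w0_inv : D.w0⁻¹ = D.w0 := by
  refine D.w0_unique _ fun α hα => ?_
  have hβ := D.actV_roots D.w0⁻¹ α (D.posRoots_subset hα)
  refine (D.roots_pos_or_neg _ hβ).resolve_left fun hpos => D.posRoots_not_neg α hα ?_
  simpa [← actV_mul_apply] using D.w0_neg _ hpos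

lemma actV_w0_actV_w0 (α : D.V) : D.actV D.w0 (D.actV D.w0 α) = α := by
  rw [← actV_mul_apply]
  nth_rw 1 [← D.w0_inv]
  rw [inv_mul_cancel, map_one]
  rfl

variable (PiM : Finset D.V)

lemma neg_actV_w0_image_deltaSimples :
    (fun α => -(D.actV D.w0 α)) '' (D.deltaSimples PiM : Set D.V) = PiM := by
  simp [deltaSimples, Set.image_image, actV_w0_actV_w0]

lemma neg_actV_w0_mem_RplusM {β : D.V} (hβ : β ∈ D.RplusM (D.deltaSimples PiM)) :
    -(D.actV D.w0 β) ∈ D.RplusM PiM := by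
  refine ⟨D.w0_neg β hβ.1, ?_⟩
  have h : -(D.actV D.w0 β) ∈ (Submodule.span ℝ (D.deltaSimples PiM : Set D.V)).map
      (-(D.actV D.w0 : D.V →ₗ[ℝ] D.V)) := Submodule.mem_map_of_mem hβ.2
  rwa [Submodule.map_span, show ⇑(-(D.actV D.w0 : D.V →ₗ[ℝ] D.V)) = fun α => -(D.actV D.w0 α)
    from rfl, neg_actV_w0_image_deltaSimples] at h

lemma actV_w0_mul_mem_RplusM {w0dM : D.W}
    (hw0dM : ∀ α ∈ D.RplusM (D.deltaSimples PiM), -(D.actV w0dM α) ∈ D.RplusM (D.deltaSimples PiM))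
    : ∀ α ∈ D.RplusM (D.deltaSimples PiM), D.actV (D.w0 * w0dM) α ∈ D.RplusM PiM :=
  fun α hα => by simpa [actV_mul_apply] using neg_actV_w0_mem_RplusM PiM (hw0dM α hα)

lemma IsMinRep.mul {PiN : Finset D.V} {c u : D.W} (hc : D.IsMinRep PiM c)
    (hu : ∀ α ∈ D.RplusM PiN, D.actV u α ∈ D.RplusM PiM) : D.IsMinRep PiN (c * u) :=
  fun α hα => by
    rw [actV_mul_apply]
    exact hc _ (hu α hα)

lemma map_conj_w0_WM (hPiM : PiM ⊆ D.roots) :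
    (D.WM PiM).map (MulAut.conj D.w0).toMonoidHom = D.WM (D.deltaSimples PiM) := by
  rw [WM, WM, MonoidHom.map_closure, deltaSimples, Finset.coe_image, Set.image_image,
    Set.image_image]
  refine congrArg _ (Set.image_congr fun α hα => ?_)
  have hα : α ∈ D.roots := hPiM hα
  rw [MulEquiv.coe_toMonoidHom, MulAut.conj_apply, mul_s_mul_inv _ hα,
    s_neg (D.actV_roots _ _ hα)]

lemma conj_mem_WM_deltaSimples (hPiM : PiM ⊆ D.roots) {w0dM : D.W}
    (hw0dM : w0dM ∈ D.WM (D.deltaSimples PiM)) {m : D.W} (hm : m ∈ D.WM PiM) :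
    (D.w0 * w0dM)⁻¹ * m * (D.w0 * w0dM) ∈ D.WM (D.deltaSimples PiM) := by
  have hconj : D.w0 * m * D.w0⁻¹ ∈ D.WM (D.deltaSimples PiM) :=
    map_conj_w0_WM PiM hPiM ▸ Subgroup.mem_map_of_mem _ hm
  have hu : (D.w0 * w0dM)⁻¹ * m * (D.w0 * w0dM) = w0dM⁻¹ * (D.w0 * m * D.w0⁻¹) * w0dM := by
    simp only [mul_inv_rev, D.w0_inv]
    group
  rw [hu]
  exact mul_mem (mul_mem (inv_mem hw0dM) hconj) hw0dM

end GHA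

open GHA in
/-- c_{δ(M)}(x·w⁰_M) = c_M(x)·w⁰_M and
m_{δ(M)}(x·w⁰_M) = (w⁰_M)⁻¹·m_M(x)·w⁰_M. -/
theorem stmt_16 (D : GHA) (PiM : Finset D.V) (hPiM : PiM ⊆ D.simples)
    (w0dM : D.W) (hw0dM : D.IsLongest (D.deltaSimples PiM) w0dM)
    (cdM : GHA.CosetData D PiM) (cdD : GHA.CosetData D (D.deltaSimples PiM))
    (x : D.W) :
    cdD.c (x * (D.w0 * w0dM)) = cdM.c x * (D.w0 * w0dM) ∧
    cdD.m (x * (D.w0 * w0dM)) = (D.w0 * w0dM)⁻¹ * cdM.m x * (D.w0 * w0dM) := by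
  set u := D.w0 * w0dM
  have hmin : D.IsMinRep (D.deltaSimples PiM) (cdM.c x * u) :=
    (cdM.c_min x).mul PiM (actV_w0_mul_mem_RplusM PiM hw0dM.2)
  have hroots : PiM ⊆ D.roots := hPiM.trans (D.simples_subset.trans D.posRoots_subset)
  have hconj : u⁻¹ * cdM.m x * u ∈ D.WM (D.deltaSimples PiM) :=
    conj_mem_WM_deltaSimples PiM hroots hw0dM.1 (cdM.m_mem x)
  have hfactor : x * u = (cdM.c x * u) * (u⁻¹ * cdM.m x * u) := by
    nth_rw 1 [cdM.factor x]
    group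
  obtain ⟨hc, hm⟩ := cdD.uniq _ _ _ hmin hconj hfactor
  exact ⟨hc.symm, hm.symm⟩
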